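/- arXiv:2506.19673 — 2 statements merged into one kernel-verified Lean document; each statement's English description precedes it below -/
import Mathlib

section
/- Let G be a group, H ≤ G a subgroup of index 2, and σ ∈ G \ H. Let V be a vector space (or module) with a linear representation ρ of H. Then the formulas h · (v ⊗ w) = (ρ(h)v) ⊗ (ρ(σ⁻¹hσ)w) for h ∈ H, and σ · (v ⊗ w) = (ρ(σ²)w) ⊗ v, extend uniquely to a well-defined linear representation of G on V ⊗ V (the tensor induction of ρ). -/
open TensorProduct

/-- Tensor induction of a representation from an index-2 subgroup:
the given formulas extend uniquely to a representation of `G` on `V ⊗ V`. -/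
theorem tensor_induction_exists_unique
    {k : Type*} [Field k] {V : Type*} [AddCommGroup V] [Module k V]
    {G : Type*} [Group G] (H : Subgroup G) (hH : H.index = 2)
    (σ : G) (hσ : σ ∉ H)
    (hconj : ∀ h : H, σ⁻¹ * (h : G) * σ ∈ H) (hσ2 : σ ^ 2 ∈ H)
    (ρ : Representation k H V) :
    ∃! π : Representation k G (V ⊗[k] V),
      (∀ h : H, ∀ v w : V,
        π (h : G) (v ⊗ₜ[k] w) = (ρ h v) ⊗ₜ[k] (ρ ⟨σ⁻¹ * (h : G) * σ, hconj h⟩ w)) ∧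
      (∀ v w : V, π σ (v ⊗ₜ[k] w) = (ρ ⟨σ ^ 2, hσ2⟩ w) ⊗ₜ[k] v) := by
  classical
  have hσi : σ⁻¹ ∉ H := fun h => hσ (by simpa using H.inv_mem h)
  have memA : ∀ g : G, g ∉ H → g * σ ∈ H := fun g hg =>
    (Subgroup.mul_mem_iff_of_index_two hH).mpr (iff_of_false hg hσ)
  have memB : ∀ g : G, g ∉ H → σ⁻¹ * g ∈ H := fun g hg =>
    (Subgroup.mul_mem_iff_of_index_two hH).mpr (iff_of_false hσi hg)
  have memB' : ∀ g : G, g ∉ H → g * σ⁻¹ ∈ H := fun g hg =>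
    (Subgroup.mul_mem_iff_of_index_two hH).mpr (iff_of_false hg hσi)
  have memC : ∀ g : G, g ∈ H → σ⁻¹ * g * σ ∈ H := by
    intro g hg
    have h1 : σ⁻¹ * g ∉ H := by
      intro h
      exact hσi ((Subgroup.mul_mem_iff_of_index_two hH).mp h |>.mpr hg)
    exact (Subgroup.mul_mem_iff_of_index_two hH).mpr (iff_of_false h1 hσ)
  -- helper lemmas about ρ on explicit subtypes
  have hcg : ∀ (a b : G) (ha : a ∈ H) (hb : b ∈ H), a = b →
      ∀ x : V, ρ ⟨a, ha⟩ x = ρ ⟨b, hb⟩ x := by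
    rintro a b ha hb rfl x; rfl
  have hρ2 : ∀ (a b c : G) (ha : a ∈ H) (hb : b ∈ H) (hc : c ∈ H), a * b = c →
      ∀ x : V, ρ ⟨a, ha⟩ (ρ ⟨b, hb⟩ x) = ρ ⟨c, hc⟩ x := by
    intro a b c ha hb hc h x
    subst h
    have h1 : (⟨a, ha⟩ * ⟨b, hb⟩ : H) = ⟨a * b, hc⟩ := rfl
    rw [← h1, map_mul]
    rfl
  have hone : ∀ (a : G) (ha : a ∈ H), a = 1 → ∀ x : V, ρ ⟨a, ha⟩ x = x := by
    rintro a ha rfl x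
    have h1 : (⟨(1 : G), ha⟩ : H) = 1 := rfl
    rw [h1, map_one]
    rfl
  -- the underlying function
  set f : G → (V ⊗[k] V →ₗ[k] V ⊗[k] V) := fun g =>
    if hg : g ∈ H then
      TensorProduct.map (ρ ⟨g, hg⟩) (ρ ⟨σ⁻¹ * g * σ, memC g hg⟩)
    else
      (TensorProduct.map (ρ ⟨g * σ, memA g hg⟩) (ρ ⟨σ⁻¹ * g, memB g hg⟩)).comp
        (TensorProduct.comm k V V).toLinearMap
    with hf
  have hf1 : ∀ (g : G) (hg : g ∈ H) (v w : V),
      f g (v ⊗ₜ[k] w) = (ρ ⟨g, hg⟩ v) ⊗ₜ[k] (ρ ⟨σ⁻¹ * g * σ, memC g hg⟩ w) := by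
    intro g hg v w
    rw [hf]; simp only [dif_pos hg, TensorProduct.map_tmul]
  have hf2 : ∀ (g : G) (hg : g ∉ H) (v w : V),
      f g (v ⊗ₜ[k] w) = (ρ ⟨g * σ, memA g hg⟩ w) ⊗ₜ[k] (ρ ⟨σ⁻¹ * g, memB g hg⟩ v) := by
    intro g hg v w
    rw [hf]
    simp only [dif_neg hg, LinearMap.comp_apply, LinearEquiv.coe_coe,
      TensorProduct.comm_tmul, TensorProduct.map_tmul]
  -- the representation
  set π : Representation k G (V ⊗[k] V) :=
    { toFun := f
      map_one' := by
        apply TensorProduct.ext'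
        intro v w
        rw [hf1 1 H.one_mem v w, hone 1 H.one_mem rfl v,
          hone (σ⁻¹ * 1 * σ) (memC 1 H.one_mem) (by group) w]
        rfl
      map_mul' := by
        intro g g'
        apply TensorProduct.ext'
        intro v w
        rw [Module.End.mul_apply]
        by_cases hg : g ∈ H <;> by_cases hg' : g' ∈ H
        · have hgg' : g * g' ∈ H := H.mul_mem hg hg'
          rw [hf1 g' hg' v w, hf1 (g * g') hgg' v w, hf1 g hg,
            hρ2 g g' (g * g') hg hg' hgg' rfl v,
            hρ2 (σ⁻¹ * g * σ) (σ⁻¹ * g' * σ) (σ⁻¹ * (g * g') * σ) _ _ _ (by group) w]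
        · have hgg' : g * g' ∉ H := by
            intro h
            exact hg' ((Subgroup.mul_mem_iff_of_index_two hH).mp h |>.mp hg)
          rw [hf2 g' hg' v w, hf2 (g * g') hgg' v w, hf1 g hg,
            hρ2 g (g' * σ) (g * g' * σ) hg _ (memA _ hgg') (by group) w,
            hρ2 (σ⁻¹ * g * σ) (σ⁻¹ * g') (σ⁻¹ * (g * g')) _ _ (memB _ hgg') (by group) v]
        · have hgg' : g * g' ∉ H := by
            intro h
            exact hg ((Subgroup.mul_mem_iff_of_index_two hH).mp h |>.mpr hg')
          rw [hf1 g' hg' v w, hf2 (g * g') hgg' v w, hf2 g hg,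
            hρ2 (g * σ) (σ⁻¹ * g' * σ) (g * g' * σ) _ _ (memA _ hgg') (by group) w,
            hρ2 (σ⁻¹ * g) g' (σ⁻¹ * (g * g')) _ hg' (memB _ hgg') (by group) v]
        · have hgg' : g * g' ∈ H :=
            (Subgroup.mul_mem_iff_of_index_two hH).mpr (iff_of_false hg hg')
          rw [hf2 g' hg' v w, hf1 (g * g') hgg' v w, hf2 g hg,
            hρ2 (g * σ) (σ⁻¹ * g') (g * g') _ _ hgg' (by group) v,
            hρ2 (σ⁻¹ * g) (g' * σ) (σ⁻¹ * (g * g') * σ) _ _ (memC _ hgg') (by group) w] }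
    with hπ
  refine ⟨π, ⟨?_, ?_⟩, ?_⟩
  · intro h v w
    have h1 : π (h : G) (v ⊗ₜ[k] w) = f (h : G) (v ⊗ₜ[k] w) := rfl
    rw [h1, hf1 (h : G) h.2 v w]
  · intro v w
    have h1 : π σ (v ⊗ₜ[k] w) = f σ (v ⊗ₜ[k] w) := rfl
    rw [h1, hf2 σ hσ v w, hcg (σ * σ) (σ ^ 2) (memA σ hσ) hσ2 (sq σ).symm w,
      hone (σ⁻¹ * σ) (memB σ hσ) (by group) v]
  · intro π' ⟨hπ1, hπ2⟩
    ext g : 1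
    apply TensorProduct.ext'
    intro v w
    by_cases hg : g ∈ H
    · have h1 := hπ1 ⟨g, hg⟩ v w
      have h2 : π g (v ⊗ₜ[k] w) = f g (v ⊗ₜ[k] w) := rfl
      rw [h1, h2, hf1 g hg v w]
    · have hgs : g * σ⁻¹ ∈ H := memB' g hg
      have h0 : π' g = π' (g * σ⁻¹) * π' σ := by rw [← map_mul]; congr 1; group
      have h2 : π g (v ⊗ₜ[k] w) = f g (v ⊗ₜ[k] w) := rfl
      rw [h0, h2, hf2 g hg v w, Module.End.mul_apply, hπ2 v w]
      have h3 := hπ1 ⟨g * σ⁻¹, hgs⟩ (ρ ⟨σ ^ 2, hσ2⟩ w) v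
      rw [h3, hρ2 (g * σ⁻¹) (σ ^ 2) (g * σ) hgs hσ2 (memA g hg) (by group) w,
        hcg (σ⁻¹ * (g * σ⁻¹) * σ) (σ⁻¹ * g) (hconj ⟨g * σ⁻¹, hgs⟩) (memB g hg) (by group) v]
end

section
/- Let V be a 2-dimensional vector space over a field k and M : V → V a linear map with eigenvalues α, β (i.e. diagonalizable with char poly (X−α)(X−β)). Then the linear map A on V ⊗ V defined by A(v ⊗ w) = (M w) ⊗ v has characteristic polynomial (X − α)(X − β)(X² − αβ). -/
open TensorProduct Polynomial

/-!
In the basis `bᵢ ⊗ bⱼ` the map sends `bᵢ ⊗ bⱼ` to `μⱼ • bⱼ ⊗ bᵢ`, where `μ = ![α, β]`, so its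
matrix is the swap permutation matrix twisted by the eigenvalues. Splitting the index pairs into
diagonal and off-diagonal ones makes it block diagonal: `b₀ ⊗ b₀` and `b₁ ⊗ b₁` are eigenvectors
for `α` and `β`, and on the span of `b₀ ⊗ b₁, b₁ ⊗ b₀` the map acts by `!![0, α; β, 0]`, whose
characteristic polynomial is `X² − αβ`.
-/

def twistedSwapMatrix {R ι : Type*} [Zero R] [DecidableEq ι] (μ : ι → R) :
    Matrix (ι × ι) (ι × ι) R :=
  Matrix.of fun p q => if p = q.swap then μ q.2 else 0

theorem toMatrix_tensorProduct_eq_twistedSwapMatrix {R ι V : Type*} [CommRing R]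
    [AddCommGroup V] [Module R V] [Fintype ι] [DecidableEq ι] (M : V →ₗ[R] V)
    (b : Module.Basis ι R V) (μ : ι → R) (hM : ∀ i, M (b i) = μ i • b i)
    (A : V ⊗[R] V →ₗ[R] V ⊗[R] V) (hA : ∀ v w : V, A (v ⊗ₜ[R] w) = (M w) ⊗ₜ[R] v) :
    LinearMap.toMatrix (b.tensorProduct b) (b.tensorProduct b) A = twistedSwapMatrix μ := by
  ext ⟨i, j⟩ ⟨i', j'⟩
  simp only [LinearMap.toMatrix_apply, Module.Basis.tensorProduct_apply, hA, hM,
    Module.Basis.tensorProduct_repr_tmul_apply, twistedSwapMatrix, Module.Basis.repr_self,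
    Finsupp.single_apply, map_smul, Finsupp.smul_single, smul_eq_mul, mul_one, mul_ite, ite_mul,
    one_mul, zero_mul, mul_zero, Matrix.of_apply, Prod.swap_prod_mk, Prod.mk.injEq]
  grind

def finTwoProdEquivDiagSumOffDiag : Fin 2 × Fin 2 ≃ Fin 2 ⊕ Fin 2 where
  toFun p := if p.1 = p.2 then .inl p.1 else .inr p.1
  invFun := Sum.elim (fun i => (i, i)) (fun i => (i, i.rev))
  left_inv := by decide
  right_inv := by decide

theorem reindex_twistedSwapMatrix_fin_two {R : Type*} [Zero R] (μ : Fin 2 → R) :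
    Matrix.reindex finTwoProdEquivDiagSumOffDiag finTwoProdEquivDiagSumOffDiag
        (twistedSwapMatrix μ) =
      Matrix.fromBlocks (Matrix.diagonal μ) 0 0 !![0, μ 0; μ 1, 0] := by
  ext (i | i) (j | j) <;> fin_cases i <;> fin_cases j <;>
    simp [finTwoProdEquivDiagSumOffDiag, twistedSwapMatrix]

theorem charpoly_twistedSwapMatrix_fin_two {R : Type*} [CommRing R] [Nontrivial R]
    (μ : Fin 2 → R) :
    (twistedSwapMatrix μ).charpoly =
      (X - C (μ 0)) * (X - C (μ 1)) * (X ^ 2 - C (μ 0 * μ 1)) := by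
  rw [← Matrix.charpoly_reindex finTwoProdEquivDiagSumOffDiag, reindex_twistedSwapMatrix_fin_two,
    Matrix.charpoly_fromBlocks_zero₁₂, Matrix.charpoly_diagonal, Matrix.charpoly_fin_two,
    Fin.prod_univ_two, Matrix.trace_fin_two, Matrix.det_fin_two]
  simp only [Matrix.of_apply, Matrix.cons_val', Matrix.cons_val_zero, Matrix.cons_val_one,
    Matrix.empty_val', Matrix.cons_val_fin_one, add_zero, C_0, zero_mul, sub_zero, mul_zero,
    zero_sub, map_neg]
  ring

/-- The twisted swap `A(v ⊗ w) = (M w) ⊗ v` on `V ⊗ V`, for `M` diagonalizable on a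
2-dimensional `V` with eigenvalues `α, β`, has characteristic polynomial
`(X − α)(X − β)(X² − αβ)`. -/
theorem charpoly_twisted_swap
    {k : Type*} [Field k] {V : Type*} [AddCommGroup V] [Module k V]
    [FiniteDimensional k V]
    (M : V →ₗ[k] V) (α β : k)
    (b : Module.Basis (Fin 2) k V)
    (hb0 : M (b 0) = α • b 0) (hb1 : M (b 1) = β • b 1)
    (A : V ⊗[k] V →ₗ[k] V ⊗[k] V)
    (hA : ∀ v w : V, A (v ⊗ₜ[k] w) = (M w) ⊗ₜ[k] v) :
    LinearMap.charpoly A = (X - C α) * (X - C β) * (X ^ 2 - C (α * β)) := by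
  have hM : ∀ i, M (b i) = ![α, β] i • b i := Fin.forall_fin_two.2 ⟨hb0, hb1⟩
  rw [← LinearMap.charpoly_toMatrix A (b.tensorProduct b),
    toMatrix_tensorProduct_eq_twistedSwapMatrix M b _ hM A hA, charpoly_twistedSwapMatrix_fin_two]
  rfl
end
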